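/- Let A be an associative algebra over a field k, let h ∈ k, and suppose α, β, γ, δ ∈ A satisfy the Gr_h(2) relations. Form the 2×2 matrix Â = [[α,β],[γ,δ]] over A, the 4×4 matrices Â₁ = Â ⊗ I₂ and Â₂ = I₂ ⊗ Â (Kronecker products with the 2×2 identity matrix), and the 4×4 scalar matrix R_h = [[1,−h,h,h²],[0,1,0,−h],[0,0,1,h],[0,0,0,1]]. Then R_h Â₁ Â₂ = − Â₂ Â₁ R_h. -/
import Mathlib


open Kronecker

/-- Index map `(i,j) ∈ {1,2}×{1,2}` (0-based) to `Fin 4`, row-major: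
`(1,1),(1,2),(2,1),(2,2)`. -/
def pairIdx : Fin 2 × Fin 2 → Fin 4 := fun p => ⟨2 * p.1.1 + p.2.1, by omega⟩

/-- The 4×4 matrix `R_h = [[1,−h,h,h²],[0,1,0,−h],[0,0,1,h],[0,0,0,1]]`
over a field `k`. -/
def Rh {k : Type*} [Field k] (h : k) : Matrix (Fin 2 × Fin 2) (Fin 2 × Fin 2) k :=
  Matrix.of fun p q =>
    (!![1, -h, h, h^2;
        0,  1, 0, -h;
        0,  0, 1, h;
        0,  0, 0, 1] : Matrix (Fin 4) (Fin 4) k) (pairIdx p) (pairIdx q)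

/-- If `α, β, γ, δ` satisfy the `Gr_h(2)` relations, then with
`Â = [[α,β],[γ,δ]]`, `Â₁ = Â ⊗ I₂`, `Â₂ = I₂ ⊗ Â` one has
`R_h Â₁ Â₂ = − Â₂ Â₁ R_h`. -/
theorem Rh_relation_of_Grh {k A : Type*} [Field k] [Ring A] [Algebra k A]
    (h : k) (α β γ δ : A)
    (h1 : α * β + β * α = h • (α * δ + β * γ))
    (h2 : α * γ + γ * α = 0)
    (h3 : β * γ + γ * β = h • (δ * γ - γ * α))
    (h4 : β * δ + δ * β = -(h • (α * δ + γ * β)))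
    (h5 : α * δ + δ * α = h • (γ * α - δ * γ))
    (h6 : γ * δ + δ * γ = 0)
    (h7 : α * α = -(h • (γ * α)))
    (h8 : β * β = h • (β * δ - α * β + h • (α * δ)))
    (h9 : γ * γ = 0)
    (h10 : δ * δ = h • (δ * γ)) :
    let Ahat : Matrix (Fin 2) (Fin 2) A := !![α, β; γ, δ]
    let A1 := Ahat ⊗ₖ (1 : Matrix (Fin 2) (Fin 2) A)
    let A2 := (1 : Matrix (Fin 2) (Fin 2) A) ⊗ₖ Ahat
    let R := (Rh h).map (algebraMap k A)
    R * A1 * A2 = -(A2 * A1 * R) := by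
  intro Ahat A1 A2 R
  have ga : γ * α = -(α * γ) := eq_neg_of_add_eq_zero_right h2
  have dg : δ * γ = -(γ * δ) := eq_neg_of_add_eq_zero_right h6
  have ba : β * α = h • (α * δ + β * γ) - α * β := eq_sub_of_add_eq' h1
  have gb : γ * β = h • (δ * γ - γ * α) - β * γ := eq_sub_of_add_eq' h3
  have db : δ * β = -(h • (α * δ + γ * β)) - β * δ := eq_sub_of_add_eq' h4
  have da : δ * α = h • (γ * α - δ * γ) - α * δ := eq_sub_of_add_eq' h5
  ext ⟨i,j⟩ ⟨l,m⟩
  fin_cases i <;> fin_cases j <;> fin_cases l <;> fin_cases m <;>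
    simp [Ahat, A1, A2, R, Rh, pairIdx, Matrix.mul_apply, Fintype.sum_prod_type, Fin.sum_univ_two, Matrix.kroneckerMap_apply, Matrix.one_apply, Algebra.algebraMap_eq_smul_one, smul_smul]
  all_goals
    simp only [Matrix.vecHead, Matrix.vecTail, add_mul, mul_add, sub_mul, mul_sub,
      neg_mul, mul_neg, smul_mul_assoc, mul_smul_comm, smul_add, smul_sub, smul_neg,
      smul_smul, ga, dg, ba, gb, db, da, h7, h8, h9, h10, Function.comp_apply,
      Matrix.cons_val_zero, Matrix.cons_val_one]
  all_goals module
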